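/- Let α ∈ ℝ and γ, σ ∈ ℂ satisfy Re γ > 0 and Re σ > -1. Then P_{γ-1}^{-σ-γ}(tanh α) · (cosh α)^{-γ} = (2^{-γ} / (Γ(γ) Γ(σ+1))) · ∫_0^∞ (sinh(t/2))^σ (cosh(t/2 + α))^{-σ-2γ} dt, where all complex powers of positive reals are principal branches. -/

import Mathlib

/-!
The substitution `v = (1 + e^{2α}) / (1 + e^{2α} e^t)` maps `(0, ∞)` onto `(0, 1)` and turns the
integral into Euler's integral `∫₀¹ v^{γ-1} (1-v)^σ (1 - w v)^{γ-1} dv` with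
`w = (1 + e^{2α})⁻¹ = (1 - tanh α) / 2`. Expanding `(1 - w v)^{γ-1}` by the binomial series and
integrating termwise against the Beta kernel produces `Γ(γ) Γ(σ+1)` times the hypergeometric
series defining `P_{γ-1}^{-σ-γ}(tanh α)`; the remaining powers of `e^α`, `cosh α` and `2` match.
-/

noncomputable def pochC (a : ℂ) (n : ℕ) : ℂ := (ascPochhammer ℂ n).eval a

/-- Ferrers function of the first kind `P_ν^μ(x)`. -/
noncomputable def ferrersP (ν μ : ℂ) (x : ℝ) : ℂ :=
  (((1 + x) / (1 - x) : ℝ) : ℂ) ^ (μ / 2) *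
    ∑' n : ℕ, pochC (-ν) n * pochC (ν + 1) n /
        (Complex.Gamma ((n : ℂ) + 1 - μ) * (n.factorial : ℂ)) *
      (((1 - x) / 2 : ℝ) : ℂ) ^ n

open Complex MeasureTheory Set

theorem choose_add_sub_one_eq_pochC_div_factorial (a : ℂ) (n : ℕ) :
    Ring.choose (a + n - 1) n = pochC a n / n.factorial := by
  rw [← Ring.multichoose_eq, eq_div_iff (by exact_mod_cast n.factorial_ne_zero), mul_comm,
    ← nsmul_eq_mul, Ring.factorial_nsmul_multichoose_eq_ascPochhammer, pochC,
    Polynomial.ascPochhammer_smeval_eq_eval]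

theorem hasFPowerSeriesOnBall_one_div_one_sub_cpow (a : ℂ) :
    HasFPowerSeriesOnBall (fun x ↦ 1 / (1 - x) ^ a)
      (.ofScalars ℂ fun n ↦ pochC a n / n.factorial) 0 1 := by
  simpa only [choose_add_sub_one_eq_pochC_div_factorial] using
    Complex.one_div_one_sub_cpow_hasFPowerSeriesOnBall_zero a

theorem hasSum_pochC_div_factorial_mul_pow (a : ℂ) {x : ℂ} (hx : ‖x‖ < 1) :
    HasSum (fun n ↦ pochC a n / n.factorial * x ^ n) ((1 - x) ^ (-a)) := by
  have hx' : x ∈ Metric.eball 0 1 := by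
    rwa [Metric.mem_eball, edist_zero_right, ← ofReal_norm, ENNReal.ofReal_lt_one]
  simpa [FormalMultilinearSeries.ofScalars_apply_eq, Complex.cpow_neg, mul_comm] using
    (hasFPowerSeriesOnBall_one_div_one_sub_cpow a).hasSum hx'

theorem summable_norm_pochC_div_factorial_mul_pow (a : ℂ) {r : ℝ} (hr0 : 0 ≤ r) (hr1 : r < 1) :
    Summable (fun n ↦ ‖pochC a n / n.factorial‖ * r ^ n) := by
  lift r to NNReal using hr0
  have := FormalMultilinearSeries.summable_norm_mul_pow _ (r := r)
    ((ENNReal.coe_lt_one_iff.mpr (by exact_mod_cast hr1)).trans_le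
      (hasFPowerSeriesOnBall_one_div_one_sub_cpow a).r_le)
  simpa [FormalMultilinearSeries.ofScalars_norm] using this

theorem Gamma_add_nat_eq_pochC_mul_Gamma {b : ℂ} (hb : ∀ k : ℕ, b ≠ -k) (n : ℕ) :
    Gamma (b + n) = pochC b n * Gamma b := by
  rw [pochC, ← Gamma_add_nat_div_Gamma_eq b hb, div_mul_cancel₀ _ (Gamma_ne_zero hb)]

noncomputable def betaKernel (b c : ℂ) (v : ℝ) : ℂ := (v : ℂ) ^ (b - 1) * (1 - (v : ℂ)) ^ (c - 1)

theorem integrableOn_betaKernel {b c : ℂ} (hb : 0 < b.re) (hc : 0 < c.re) :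
    IntegrableOn (betaKernel b c) (Ioo 0 1) :=
  ((intervalIntegrable_iff_integrableOn_Ioc_of_le zero_le_one).mp
    (betaIntegral_convergent hb hc)).mono_set Ioo_subset_Ioc_self

theorem setIntegral_betaKernel (b c : ℂ) :
    ∫ v in Ioo (0 : ℝ) 1, betaKernel b c v = betaIntegral b c := by
  rw [betaIntegral, intervalIntegral.integral_of_le zero_le_one, integral_Ioc_eq_integral_Ioo]
  rfl

theorem betaKernel_mul_pow (b c : ℂ) {v : ℝ} (hv : 0 < v) (n : ℕ) :
    betaKernel b c v * (v : ℂ) ^ n = betaKernel (b + n) c v := by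
  rw [betaKernel, betaKernel, mul_right_comm, ← cpow_natCast,
    ← cpow_add _ _ (by exact_mod_cast hv.ne'), sub_add_eq_add_sub]

theorem integrableOn_betaKernel_mul_pow {b c : ℂ} (hb : 0 < b.re) (hc : 0 < c.re) (n : ℕ) :
    IntegrableOn (fun v ↦ betaKernel b c v * (v : ℂ) ^ n) (Ioo 0 1) := by
  have hbn : 0 < (b + n).re := by simpa using add_pos_of_pos_of_nonneg hb n.cast_nonneg
  exact (integrableOn_betaKernel hbn hc).congr_fun
    (fun v hv ↦ (betaKernel_mul_pow b c hv.1 n).symm) measurableSet_Ioo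

theorem setIntegral_betaKernel_mul_pow {b c : ℂ} (hb : 0 < b.re) (hc : 0 < c.re) (n : ℕ) :
    ∫ v in Ioo (0 : ℝ) 1, betaKernel b c v * (v : ℂ) ^ n
      = Gamma b * Gamma c * (pochC b n / Gamma (b + n + c)) := by
  have hbn : 0 < (b + n).re := by simpa using add_pos_of_pos_of_nonneg hb n.cast_nonneg
  have hb' : ∀ k : ℕ, b ≠ -k := fun k hk ↦ by
    simp only [hk, neg_re, natCast_re, Left.neg_pos_iff] at hb
    linarith [k.cast_nonneg (α := ℝ)]
  have h := Gamma_mul_Gamma_eq_betaIntegral hbn hc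
  rw [Gamma_add_nat_eq_pochC_mul_Gamma hb', ← setIntegral_betaKernel] at h
  rw [setIntegral_congr_fun measurableSet_Ioo fun v hv ↦ betaKernel_mul_pow b c hv.1 n]
  have hbnc : Gamma (b + n + c) ≠ 0 := Gamma_ne_zero_of_re_pos
    (by simp only [add_re, natCast_re]; positivity)
  field_simp
  linear_combination -h

theorem setIntegral_betaKernel_mul_one_sub_mul_cpow {a b c w : ℂ} (hb : 0 < b.re) (hc : 0 < c.re)
    (hw : ‖w‖ < 1) :
    ∫ v in Ioo (0 : ℝ) 1, betaKernel b c v * (1 - w * v) ^ (-a)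
      = Gamma b * Gamma c *
          ∑' n : ℕ, pochC a n * pochC b n / (Gamma (b + n + c) * n.factorial) * w ^ n := by
  set F : ℕ → ℝ → ℂ := fun n v ↦
    pochC a n / n.factorial * w ^ n * (betaKernel b c v * (v : ℂ) ^ n)
  have hF : ∀ n, IntegrableOn (F n) (Ioo 0 1) := fun n ↦
    (integrableOn_betaKernel_mul_pow hb hc n).const_mul _
  have hF_norm : ∀ n, ∫ v in Ioo (0 : ℝ) 1, ‖F n v‖
      ≤ ‖pochC a n / n.factorial‖ * ‖w‖ ^ n * ∫ v in Ioo (0 : ℝ) 1, ‖betaKernel b c v‖ := by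
    intro n
    rw [← integral_const_mul]
    refine setIntegral_mono_on (hF n).norm ((integrableOn_betaKernel hb hc).norm.const_mul _)
      measurableSet_Ioo fun v hv ↦ ?_
    have hvn : ‖(v : ℂ)‖ ^ n ≤ 1 := by
      rw [norm_real, Real.norm_of_nonneg hv.1.le]
      exact pow_le_one₀ hv.1.le hv.2.le
    simp only [F, norm_mul, norm_pow]
    gcongr
    exact mul_le_of_le_one_right (norm_nonneg _) hvn
  have hsum := hasSum_integral_of_summable_integral_norm hF <|
    ((summable_norm_pochC_div_factorial_mul_pow a (norm_nonneg w) hw).mul_right _).of_nonneg_of_le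
      (fun n ↦ integral_nonneg fun v ↦ norm_nonneg _) hF_norm
  have hpoint : ∀ v ∈ Ioo (0 : ℝ) 1, ∑' n, F n v = betaKernel b c v * (1 - w * v) ^ (-a) := by
    intro v hv
    have hwv : ‖w * v‖ < 1 := by
      rw [norm_mul, norm_real, Real.norm_of_nonneg hv.1.le]
      exact mul_lt_one_of_nonneg_of_lt_one_left (norm_nonneg w) hw hv.2.le
    rw [← ((hasSum_pochC_div_factorial_mul_pow a hwv).mul_left (betaKernel b c v)).tsum_eq]
    exact tsum_congr fun n ↦ by simp only [F]; ring
  rw [← setIntegral_congr_fun measurableSet_Ioo hpoint, ← hsum.tsum_eq, ← tsum_mul_left]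
  refine tsum_congr fun n ↦ ?_
  rw [integral_const_mul, setIntegral_betaKernel_mul_pow hb hc]
  ring

theorem integral_Ioo_zero_one_eq_integral_Ioi_comp {E : Type*} [NormedAddCommGroup E]
    [NormedSpace ℝ E] {Z : ℝ} (hZ : 0 < Z) (f : ℝ → E) :
    ∫ v in Ioo (0 : ℝ) 1, f v
      = ∫ t in Ioi (0 : ℝ),
          ((1 + Z) * Z * Real.exp t / (1 + Z * Real.exp t) ^ 2) •
            f ((1 + Z) / (1 + Z * Real.exp t)) := by
  set φ : ℝ → ℝ := fun t ↦ (1 + Z) / (1 + Z * Real.exp t)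
  have hq : ∀ t, 0 < 1 + Z * Real.exp t := fun t ↦ by positivity
  have hderiv : ∀ t ∈ Ioi (0 : ℝ), HasDerivWithinAt φ
      (-((1 + Z) * Z * Real.exp t / (1 + Z * Real.exp t) ^ 2)) (Ioi 0) t := by
    intro t _
    have h := ((((Real.hasDerivAt_exp t).const_mul Z).const_add 1).inv (hq t).ne').const_mul (1 + Z)
    simp only [Pi.inv_apply, ← div_eq_mul_inv] at h
    exact (h.congr_deriv (by ring)).hasDerivWithinAt
  have hinj : InjOn φ (Ioi 0) := by
    intro t₁ _ t₂ _ h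
    rw [div_eq_div_iff (hq t₁).ne' (hq t₂).ne'] at h
    have := mul_left_cancel₀ (by positivity) h
    exact Real.exp_injective (mul_left_cancel₀ hZ.ne' (by linarith))
  have himage : φ '' Ioi 0 = Ioo 0 1 := by
    ext v
    constructor
    · rintro ⟨t, ht, rfl⟩
      refine ⟨by positivity, (div_lt_one (hq t)).mpr ?_⟩
      nlinarith [Real.one_lt_exp_iff.mpr ht]
    · rintro ⟨hv0, hv1⟩
      refine ⟨Real.log ((1 + Z - v) / (Z * v)), ?_, ?_⟩
      · apply Real.log_pos
        rw [one_lt_div (by positivity)]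
        nlinarith
      · have : 0 < 1 + Z - v := by linarith
        simp only [φ, Real.exp_log (by positivity : 0 < (1 + Z - v) / (Z * v))]
        field_simp
        ring
  rw [← himage, integral_image_eq_integral_abs_deriv_smul measurableSet_Ioi hderiv hinj]
  refine setIntegral_congr_fun measurableSet_Ioi fun t _ ↦ ?_
  rw [abs_neg, abs_of_pos (by positivity)]

theorem ofReal_exp_cpow (x : ℝ) (s : ℂ) : ((Real.exp x : ℝ) : ℂ) ^ s = exp (x * s) := by
  rw [cpow_def_of_ne_zero (by exact_mod_cast (Real.exp_pos x).ne'),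
    ← ofReal_log (Real.exp_pos x).le, Real.log_exp]

theorem sinh_cpow_mul_cosh_cpow_eq {α Z t : ℝ} (hZ : Real.exp (2 * α) = Z) (ht : 0 < t) (γ σ : ℂ) :
    ((Real.sinh (t / 2) : ℝ) : ℂ) ^ σ * ((Real.cosh (t / 2 + α) : ℝ) : ℂ) ^ (-σ - 2 * γ)
      = 2 ^ γ * (Z : ℂ) ^ (-(σ + γ) / 2) * ((Real.cosh α : ℝ) : ℂ) ^ (-γ) *
        (((1 + Z) * Z * Real.exp t / (1 + Z * Real.exp t) ^ 2) •
          (betaKernel γ (σ + 1) ((1 + Z) / (1 + Z * Real.exp t)) *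
            (1 - (((1 + Z)⁻¹ : ℝ) : ℂ) * (((1 + Z) / (1 + Z * Real.exp t) : ℝ) : ℂ)) ^
              (-(1 - γ)))) := by
  subst hZ
  have hu : 1 < Real.exp t := Real.one_lt_exp_iff.mpr ht
  have hZ : 0 < Real.exp (2 * α) := Real.exp_pos _
  have hu_sq : Real.exp (t / 2) ^ 2 = Real.exp t := by rw [← Real.exp_nat_mul]; ring_nf
  have hZ_sq : Real.exp α ^ 2 = Real.exp (2 * α) := by rw [← Real.exp_nat_mul]; ring_nf
  have hp : 0 < Real.exp t - 1 := by linarith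
  have hq : 0 < 1 + Real.exp (2 * α) * Real.exp t := by positivity
  have hr : 0 < 1 + Real.exp (2 * α) := by positivity
  set P := Real.log (Real.exp t - 1)
  set Q := Real.log (1 + Real.exp (2 * α) * Real.exp t)
  set R := Real.log (1 + Real.exp (2 * α))
  set L := Real.log 2
  -- Every real factor is `exp` of an integral combination of `t`, `α`, `P`, `Q`, `R`, `L`,
  -- which reduces the identity to a linear one between exponents.
  have hsinh : Real.sinh (t / 2) = Real.exp (P - L - t / 2) := by
    rw [Real.sinh_eq, Real.exp_sub, Real.exp_sub, Real.exp_log hp, Real.exp_log two_pos,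
      Real.exp_neg, ← hu_sq]
    field_simp
  have hcosh : Real.cosh (t / 2 + α) = Real.exp (Q - L - t / 2 - α) := by
    rw [Real.cosh_eq, Real.exp_sub, Real.exp_sub, Real.exp_sub, Real.exp_log hq,
      Real.exp_log two_pos, Real.exp_neg, Real.exp_add, ← hu_sq, ← hZ_sq]
    field_simp
    ring
  have hcoshα : Real.cosh α = Real.exp (R - L - α) := by
    rw [Real.cosh_eq, Real.exp_sub, Real.exp_sub, Real.exp_log hr,
      Real.exp_log two_pos, Real.exp_neg, ← hZ_sq]
    field_simp
    ring
  have hjac : (1 + Real.exp (2 * α)) * Real.exp (2 * α) * Real.exp t /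
      (1 + Real.exp (2 * α) * Real.exp t) ^ 2 = Real.exp (R + 2 * α + t - Q - Q) := by
    rw [Real.exp_sub, Real.exp_sub, Real.exp_add, Real.exp_add, Real.exp_log hq, Real.exp_log hr]
    field_simp
  have hφ : (1 + Real.exp (2 * α)) / (1 + Real.exp (2 * α) * Real.exp t) = Real.exp (R - Q) := by
    rw [Real.exp_sub, Real.exp_log hq, Real.exp_log hr]
  have hφ' : 1 - (1 + Real.exp (2 * α)) / (1 + Real.exp (2 * α) * Real.exp t)
      = Real.exp (2 * α + P - Q) := by
    rw [Real.exp_sub, Real.exp_add, Real.exp_log hq, Real.exp_log hp]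
    field_simp
    ring
  have hwφ : 1 - (1 + Real.exp (2 * α))⁻¹ *
      ((1 + Real.exp (2 * α)) / (1 + Real.exp (2 * α) * Real.exp t))
      = Real.exp (2 * α + t - Q) := by
    rw [Real.exp_sub, Real.exp_add, Real.exp_log hq]
    field_simp
    ring
  have h2 : (2 : ℂ) ^ γ = exp (L * γ) := by
    rw [← ofReal_exp_cpow, Real.exp_log two_pos]; norm_num
  have hφ'' : (1 : ℂ) - (((1 + Real.exp (2 * α)) / (1 + Real.exp (2 * α) * Real.exp t) : ℝ) : ℂ)
      = ((Real.exp (2 * α + P - Q) : ℝ) : ℂ) := by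
    rw [← hφ']; push_cast; ring
  have hwφ' : (1 : ℂ) - (((1 + Real.exp (2 * α))⁻¹ : ℝ) : ℂ) *
      (((1 + Real.exp (2 * α)) / (1 + Real.exp (2 * α) * Real.exp t) : ℝ) : ℂ)
      = ((Real.exp (2 * α + t - Q) : ℝ) : ℂ) := by
    rw [← hwφ]; push_cast; ring
  rw [betaKernel, hwφ', hφ'', hφ, hsinh, hcosh, hcoshα, hjac, h2]
  simp only [ofReal_exp_cpow]
  simp only [real_smul, ofReal_exp, ← exp_add]
  congr 1
  push_cast
  ring

theorem integral_sinh_cpow_mul_cosh_cpow (α : ℝ) (γ σ : ℂ) :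
    ∫ t in Ioi (0 : ℝ), ((Real.sinh (t / 2) : ℝ) : ℂ) ^ σ *
        ((Real.cosh (t / 2 + α) : ℝ) : ℂ) ^ (-σ - 2 * γ)
      = 2 ^ γ * ((Real.exp (2 * α) : ℝ) : ℂ) ^ (-(σ + γ) / 2) * ((Real.cosh α : ℝ) : ℂ) ^ (-γ) *
        ∫ v in Ioo (0 : ℝ) 1,
          betaKernel γ (σ + 1) v * (1 - (((1 + Real.exp (2 * α))⁻¹ : ℝ) : ℂ) * v) ^ (-(1 - γ)) := by
  rw [integral_Ioo_zero_one_eq_integral_Ioi_comp (Real.exp_pos (2 * α)), ← integral_const_mul]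
  exact setIntegral_congr_fun measurableSet_Ioi fun t ht ↦ sinh_cpow_mul_cosh_cpow_eq rfl ht γ σ

theorem Real.one_add_tanh_div_one_sub_tanh (x : ℝ) :
    (1 + Real.tanh x) / (1 - Real.tanh x) = Real.exp (2 * x) := by
  have h : Real.exp (2 * x) = Real.exp x ^ 2 := by rw [← Real.exp_nat_mul]; ring_nf
  rw [Real.tanh_eq_sinh_div_cosh, Real.sinh_eq, Real.cosh_eq, Real.exp_neg, h]
  field_simp
  ring

theorem Real.one_sub_tanh_div_two (x : ℝ) :
    (1 - Real.tanh x) / 2 = (1 + Real.exp (2 * x))⁻¹ := by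
  have h : Real.exp (2 * x) = Real.exp x ^ 2 := by rw [← Real.exp_nat_mul]; ring_nf
  rw [Real.tanh_eq_sinh_div_cosh, Real.sinh_eq, Real.cosh_eq, Real.exp_neg, h]
  field_simp
  ring

theorem stmt1 (α : ℝ) (γ σ : ℂ) (hγ : 0 < γ.re) (hσ : -1 < σ.re) :
    ferrersP (γ - 1) (-(σ + γ)) (Real.tanh α) * ((Real.cosh α : ℝ) : ℂ) ^ (-γ) =
      (2 : ℂ) ^ (-γ) / (Complex.Gamma γ * Complex.Gamma (σ + 1)) *
        ∫ t in Set.Ioi (0 : ℝ),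
          ((Real.sinh (t / 2) : ℝ) : ℂ) ^ σ *
            ((Real.cosh (t / 2 + α) : ℝ) : ℂ) ^ (-σ - 2 * γ) := by
  have hσ1 : 0 < (σ + 1).re := by rw [add_re, one_re]; linarith
  have hw : ‖(((1 + Real.exp (2 * α))⁻¹ : ℝ) : ℂ)‖ < 1 := by
    rw [norm_real, Real.norm_of_nonneg (by positivity)]
    exact inv_lt_one_of_one_lt₀ (by linarith [Real.exp_pos (2 * α)])
  have hseries : ∀ n : ℕ,
      pochC (-(γ - 1)) n * pochC (γ - 1 + 1) n / (Gamma ((n : ℂ) + 1 - -(σ + γ)) * n.factorial)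
        = pochC (1 - γ) n * pochC γ n / (Gamma (γ + n + (σ + 1)) * n.factorial) := fun n ↦ by
    rw [neg_sub, sub_add_cancel, show (n : ℂ) + 1 - -(σ + γ) = γ + n + (σ + 1) by ring]
  rw [integral_sinh_cpow_mul_cosh_cpow, setIntegral_betaKernel_mul_one_sub_mul_cpow hγ hσ1 hw,
    ferrersP, Real.one_add_tanh_div_one_sub_tanh, Real.one_sub_tanh_div_two]
  simp only [hseries]
  have hΓγ := Gamma_ne_zero_of_re_pos hγ
  have hΓσ := Gamma_ne_zero_of_re_pos hσ1
  have h2 : (2 : ℂ) ^ γ ≠ 0 := cpow_ne_zero_iff.mpr (Or.inl two_ne_zero)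
  rw [cpow_neg 2 γ]
  field_simp
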